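/- A uniformly totally bounded class of compact metric spaces is precompact in the Gromov–Hausdorff topology: if D > 0 and N : (0, D] → ℕ are such that every space X in the class has diameter at most D and can be covered by N(ε) balls of radius ε for every ε ∈ (0, D], then every sequence in the class has a subsequence converging in Gromov–Hausdorff distance to a compact metric space. -/

import Mathlib

open Metric Set GromovHausdorff Filter

/-! Each space `X j` is represented in `GHSpace` by an isometric copy, which inherits the bound
`D` on the diameter and, for `ε = D / (n + 1)`, the `N ε`-point `ε`-nets. Mathlib's uniform
version of Gromov's criterion turns these uniform bounds into total boundedness of the sequence
in the complete space `GHSpace`, where a totally bounded sequence has a convergent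
subsequence. -/

theorem exists_strictMono_tendsto_of_totallyBounded_range {α : Type*} [PseudoMetricSpace α]
    [CompleteSpace α] {u : ℕ → α} (hu : TotallyBounded (range u)) :
    ∃ φ : ℕ → ℕ, StrictMono φ ∧ ∃ a, Tendsto (u ∘ φ) atTop (nhds a) := by
  have hcompact : IsCompact (closure (range u)) :=
    hu.closure.isCompact_of_isClosed isClosed_closure
  obtain ⟨a, -, φ, hφ, hlim⟩ :=
    hcompact.tendsto_subseq fun n => subset_closure (mem_range_self n)
  exact ⟨φ, hφ, a, hlim⟩

theorem IsometryEquiv.univ_subset_iUnion_ball_image_symm {α β : Type*} [PseudoMetricSpace α]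
    [PseudoMetricSpace β] (e : α ≃ᵢ β) {s : Set β} {r : ℝ}
    (hs : univ ⊆ ⋃ y ∈ s, ball y r) : univ ⊆ ⋃ x ∈ e.symm '' s, ball x r := by
  intro x _
  obtain ⟨y, hy, hxy⟩ := mem_iUnion₂.mp (hs (mem_univ (e x)))
  refine mem_iUnion₂.mpr ⟨e.symm y, mem_image_of_mem _ hy, ?_⟩
  rwa [mem_ball, ← e.dist_eq, e.apply_symm_apply]

namespace GromovHausdorff

theorem nonempty_isometryEquiv_rep_toGHSpace (X : Type) [MetricSpace X] [CompactSpace X]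
    [Nonempty X] : Nonempty ((toGHSpace X).Rep ≃ᵢ X) := by
  rw [← toGHSpace_eq_toGHSpace_iff_isometryEquiv, GHSpace.toGHSpace_rep]

theorem totallyBounded_range_toGHSpace {ι : Type*} (X : ι → Type) [∀ i, MetricSpace (X i)]
    [∀ i, CompactSpace (X i)] [∀ i, Nonempty (X i)] {D : ℝ} (hD : 0 < D) (N : ℝ → ℕ)
    (hdiam : ∀ i, diam (univ : Set (X i)) ≤ D)
    (hcov : ∀ i, ∀ ε ∈ Ioc 0 D,
      ∃ s : Finset (X i), s.card ≤ N ε ∧ (univ : Set (X i)) ⊆ ⋃ x ∈ s, ball x ε) :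
    TotallyBounded (range fun i => toGHSpace (X i)) := by
  set u : ℕ → ℝ := fun n => D / (n + 1)
  have hu : ∀ n, u n ∈ Ioc 0 D := fun n =>
    ⟨by positivity, div_le_self hD.le (by simp)⟩
  have hlim : Tendsto u atTop (nhds 0) := by
    simpa [u, div_eq_mul_inv] using (tendsto_one_div_add_atTop_nhds_zero_nat (𝕜 := ℝ)).const_mul D
  refine GromovHausdorff.totallyBounded (C := D) (K := fun n => N (u n)) hlim ?_ ?_
  · rintro - ⟨i, rfl⟩
    obtain ⟨e⟩ := nonempty_isometryEquiv_rep_toGHSpace (X i)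
    exact e.diam_univ.trans_le (hdiam i)
  · rintro - ⟨i, rfl⟩ n
    obtain ⟨e⟩ := nonempty_isometryEquiv_rep_toGHSpace (X i)
    obtain ⟨s, hcard, hs⟩ := hcov i (u n) (hu n)
    refine ⟨e.symm '' s, ?_, e.univ_subset_iUnion_ball_image_symm hs⟩
    rw [Cardinal.mk_image_eq e.symm.injective, Finset.coe_sort_coe, Cardinal.mk_coe_finset]
    exact_mod_cast hcard

end GromovHausdorff

/-- Gromov's precompactness criterion: a uniformly totally bounded class of compact metric
spaces is precompact in the Gromov–Hausdorff topology.  If each space of a sequence has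
diameter at most `D` and can be covered by `N ε` balls of radius `ε` for every
`ε ∈ (0, D]`, then a subsequence converges in Gromov–Hausdorff distance to a compact
metric space. -/
theorem gromov_precompactness (D : ℝ) (hD : 0 < D) (N : ℝ → ℕ)
    (X : ℕ → Type) [∀ j, MetricSpace (X j)] [∀ j, CompactSpace (X j)] [∀ j, Nonempty (X j)]
    (hdiam : ∀ j, diam (univ : Set (X j)) ≤ D)
    (hcov : ∀ j, ∀ ε : ℝ, ε ∈ Set.Ioc 0 D →
      ∃ s : Finset (X j), s.card ≤ N ε ∧ (univ : Set (X j)) ⊆ ⋃ x ∈ s, ball x ε) :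
    ∃ φ : ℕ → ℕ, StrictMono φ ∧ ∃ Y : GHSpace,
      Tendsto (fun k => toGHSpace (X (φ k))) atTop (nhds Y) :=
  exists_strictMono_tendsto_of_totallyBounded_range
    (totallyBounded_range_toGHSpace X hD N hdiam hcov)
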